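/- arXiv:1108.1774 — 3 statements merged into one kernel-verified Lean document; each statement's English description precedes it below -/
import Mathlib

section
/- Let L = ℤ[x_1^{±1},...,x_n^{±1}] and suppose (v_j)_{j∈J} is a family of elements of L such that each v_j can be written as v_j = x^{a_j} + p_j, where the a_j ∈ ℕ^n are pairwise distinct and each p_j is a ℤ-linear combination of proper Laurent monomials. Then the family (v_j)_{j∈J} is linearly independent over ℤ. -/
/-!
Evaluating at the honest exponent `a j` is a linear form on `L` that sends `v j` to `1` and every
other `v i` to `0`: the monomial `x^{a i}` has a different exponent, and no proper Laurent monomial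
has the exponent `a j ∈ ℕⁿ`. A family admitting such a dual family is linearly independent.
-/

theorem Finsupp.apply_natCast_eq_zero_of_forall_exists_neg {ι R : Type*} [Zero R]
    (q : (ι → ℤ) →₀ R) (hq : ∀ c ∈ q.support, ∃ l, c l < 0) (b : ι → ℕ) :
    q (fun i => (b i : ℤ)) = 0 := by
  by_contra h
  obtain ⟨l, hl⟩ := hq _ (Finsupp.mem_support_iff.mpr h)
  exact (Int.natCast_nonneg (b l)).not_gt hl

theorem linearIndependent_single_one_add {σ J R : Type*} [CommRing R]
    (v : J → σ →₀ R) (e : J → σ) (he : Function.Injective e) (p : J → σ →₀ R)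
    (hp : ∀ i j, p i (e j) = 0) (hv : ∀ j, v j = Finsupp.single (e j) 1 + p j) :
    LinearIndependent R v := by
  refine .of_pairwise_dual_eq_zero_one v (fun j => Finsupp.lapply (e j)) (fun i j hij => ?_)
    (fun j => ?_)
  · simp [hv, hp, he.ne hij.symm]
  · simp [hv, hp]

/-- Let `L = ℤ[x₁^{±1},…,xₙ^{±1}]` (modelled as `(Fin n → ℤ) →₀ ℤ`). If each `v j`
equals the honest monomial `x^{a j}` (with `a j ∈ ℕⁿ`, the `a j` pairwise distinct)
plus a `ℤ`-linear combination `p j` of proper Laurent monomials, then the family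
`(v j)` is linearly independent over `ℤ`. -/
theorem linearIndependent_of_monomial_plus_proper {n : ℕ} {J : Type*}
    (v : J → ((Fin n → ℤ) →₀ ℤ))
    (a : J → Fin n → ℕ) (ha : Function.Injective a)
    (p : J → ((Fin n → ℤ) →₀ ℤ))
    (hp : ∀ j, ∀ c ∈ (p j).support, ∃ l, c l < 0)
    (hv : ∀ j, v j = Finsupp.single (fun i => ((a j i : ℤ))) 1 + p j) :
    LinearIndependent ℤ v :=
  linearIndependent_single_one_add v _ ((Nat.cast_injective.comp_left).comp ha) p
    (fun i j => (p i).apply_natCast_eq_zero_of_forall_exists_neg (hp i) (a j)) hv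
end

section
/- Quiver mutation at a vertex i is an involution up to isomorphism: if Q is a 2-acyclic quiver (a finite directed multigraph with no loops and no 2-cycles), then μ_i(μ_i(Q)) is isomorphic to Q as a quiver (same vertex set, bijection on arrows preserving heads and tails). -/
/-!
A 2-acyclic quiver is recovered from its skew-symmetric exchange matrix `b j k = c j k - c k j`
as `c = max b 0`. Mutation at `i` negates the row and column of `i` and adds
`c j i * c i k - c k i * c i j` to the other entries; since mutation swaps `c j i` with `c i j`,
doing it twice adds this correction and then subtracts it again. The mutated quiver is
2-acyclic as well, so `μ_i(μ_i(Q))` and `Q` have the same exchange matrix and hence coincide.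
-/

/-- A loop-free quiver on vertex set `V` is encoded (up to isomorphism) by its
arrow-count function `c`, where `c j k` is the number of arrows from `j` to `k`.
`mutCount c i` is the arrow-count function of the mutated quiver `μ_i(Q)`:
arrows through `i` are reversed, an arrow `j → k` is added for every path
`j → i → k`, and a maximal collection of disjoint 2-cycles is removed
(this is the truncated subtraction). -/
def mutCount {V : Type*} [DecidableEq V] (c : V → V → ℕ) (i : V) : V → V → ℕ :=
  fun j k =>
    if j = i ∨ k = i then c k j
    else (c j k + c j i * c i k) - (c k j + c k i * c i j)

namespace mutCount

variable {V : Type*}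

def exchangeMatrix (c : V → V → ℕ) (j k : V) : ℤ := c j k - c k j

theorem eq_toNat_exchangeMatrix {c : V → V → ℕ} {j k : V} (h : c j k = 0 ∨ c k j = 0) :
    c j k = (exchangeMatrix c j k).toNat := by
  unfold exchangeMatrix
  omega

variable [DecidableEq V]

theorem apply_left_self (c : V → V → ℕ) (i k : V) : mutCount c i i k = c k i := by
  simp [mutCount]

theorem apply_right_self (c : V → V → ℕ) (i j : V) : mutCount c i j i = c i j := by
  simp [mutCount]

theorem apply_of_ne (c : V → V → ℕ) {i j k : V} (hj : j ≠ i) (hk : k ≠ i) :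
    mutCount c i j k = (c j k + c j i * c i k) - (c k j + c k i * c i j) := by
  simp [mutCount, hj, hk]

theorem twoAcyclic {c : V → V → ℕ} (hc : ∀ v w, c v w = 0 ∨ c w v = 0) (i : V) :
    ∀ v w, mutCount c i v w = 0 ∨ mutCount c i w v = 0 := by
  intro v w
  by_cases hv : v = i
  · subst hv
    rw [apply_left_self, apply_right_self]
    exact hc w v
  by_cases hw : w = i
  · subst hw
    rw [apply_left_self, apply_right_self]
    exact hc w v
  rw [apply_of_ne c hv hw, apply_of_ne c hw hv]
  omega

theorem exchangeMatrix_of_ne (c : V → V → ℕ) {i j k : V} (hj : j ≠ i) (hk : k ≠ i) :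
    exchangeMatrix (mutCount c i) j k
      = exchangeMatrix c j k + c j i * c i k - c k i * c i j := by
  unfold exchangeMatrix
  rw [apply_of_ne c hj hk, apply_of_ne c hk hj]
  omega

end mutCount

open mutCount in
theorem mutCount_involutive_general {V : Type*} [DecidableEq V] (c : V → V → ℕ) (i : V)
    (h2acyclic : ∀ v w, c v w = 0 ∨ c w v = 0) :
    mutCount (mutCount c i) i = c := by
  funext j k
  by_cases hj : j = i
  · subst hj
    rw [apply_left_self, apply_right_self]
  by_cases hk : k = i
  · subst hk
    rw [apply_right_self, apply_left_self]
  have hexchange : exchangeMatrix (mutCount (mutCount c i) i) j k = exchangeMatrix c j k := by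
    rw [exchangeMatrix_of_ne _ hj hk, exchangeMatrix_of_ne c hj hk, apply_left_self,
      apply_right_self, apply_left_self, apply_right_self]
    ring
  rw [eq_toNat_exchangeMatrix (twoAcyclic (twoAcyclic h2acyclic i) i j k), hexchange,
    ← eq_toNat_exchangeMatrix (h2acyclic j k)]

/-- Quiver mutation at a vertex is an involution up to isomorphism: for a
2-acyclic loop-free quiver, mutating twice at `i` gives back a quiver with the
same arrow counts, i.e. a quiver isomorphic to the original one. -/
theorem mutCount_involutive {V : Type*} [DecidableEq V] (c : V → V → ℕ) (i : V)
    (hloop : ∀ v, c v v = 0)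
    (h2acyclic : ∀ v w, c v w = 0 ∨ c w v = 0) :
    mutCount (mutCount c i) i = c :=
  mutCount_involutive_general c i h2acyclic
end

section
/- Let x_1, x_2, x_3, ... be the sequence in the field ℚ(x_1, x_2) defined by the type A_2 exchange recursion x_{k+1} x_{k-1} = x_k + 1 for k ≥ 2. Then the sequence is 5-periodic (x_{k+5} = x_k for all k ≥ 1), and each x_k is a Laurent polynomial in x_1 and x_2 with nonnegative integer coefficients. -/
/-!
Over any field, the exchange recursion `x_{n+2} = (x_{n+1} + 1) / x_n` started at `a, b` produces
`a, b, (b + 1)/a, (a + b + 1)/(a b), (a + 1)/b` and then `a, b` again, as long as `a, b, a + 1,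
b + 1, a + b + 1` are nonzero; so it is 5-periodic and never vanishes, which makes it the only
solution of `x_{n+2} x_n = x_{n+1} + 1`. Each of the five terms is visibly a sum of products of
`a^{±1}, b^{±1}`, and the subsemiring generated by these is the image of `ℕ[ℤ²]` under
`m ↦ a^{m₀} b^{m₁}`. For `a = x₁, b = x₂` in `ℚ(x₁, x₂)` the five nonvanishing conditions hold
because the polynomials involved are nonzero.
-/

/-- The initial cluster variables `x₁, x₂`, viewed inside the field
`ℚ(x₁,x₂)` of rational functions in two variables. -/
noncomputable def Xvar (i : Fin 2) : FractionRing (MvPolynomial (Fin 2) ℚ) :=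
  algebraMap (MvPolynomial (Fin 2) ℚ) (FractionRing (MvPolynomial (Fin 2) ℚ))
    (MvPolynomial.X i)

section A2

variable {K : Type*} [Field K] {a b : K}

/-- `a2Seq a b n` is `x_{n+1}` for `x₁ = a`, `x₂ = b`. Off the generic locus a term may vanish,
and then the next one is the junk value `x / 0 = 0`. -/
def a2Seq (a b : K) : ℕ → K
  | 0 => a
  | 1 => b
  | n + 2 => (a2Seq a b (n + 1) + 1) / a2Seq a b n

theorem a2Seq_add_two (n : ℕ) :
    a2Seq a b (n + 2) = (a2Seq a b (n + 1) + 1) / a2Seq a b n := rfl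

theorem a2Seq_two : a2Seq a b 2 = (b + 1) / a := rfl

theorem a2Seq_three (ha : a ≠ 0) : a2Seq a b 3 = (a + b + 1) / (a * b) := by
  simp only [a2Seq]
  field_simp
  ring

theorem a2Seq_four (ha : a ≠ 0) (hb : b ≠ 0) (hb1 : b + 1 ≠ 0) : a2Seq a b 4 = (a + 1) / b := by
  rw [a2Seq, a2Seq_three ha, a2Seq_two]
  field_simp
  ring

theorem a2Seq_periodic (ha : a ≠ 0) (hb : b ≠ 0) (ha1 : a + 1 ≠ 0) (hb1 : b + 1 ≠ 0)
    (hab1 : a + b + 1 ≠ 0) : Function.Periodic (a2Seq a b) 5 := by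
  have h5 : a2Seq a b 5 = a := by
    rw [a2Seq, a2Seq_four ha hb hb1, a2Seq_three ha]
    field_simp
    ring
  have h6 : a2Seq a b 6 = b := by
    rw [a2Seq, h5, a2Seq_four ha hb hb1]
    field_simp
  intro n
  induction n using Nat.twoStepInduction with
  | zero => exact h5
  | one => exact h6
  | more n ih₀ ih₁ =>
    rw [show n + 2 + 5 = n + 5 + 2 by ring, a2Seq_add_two, show n + 5 + 1 = n + 1 + 5 by ring,
      ih₀, ih₁, a2Seq_add_two]

theorem a2Seq_mem_of_forall_lt_five (hper : Function.Periodic (a2Seq a b) 5) {S : Set K}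
    (hS : ∀ n < 5, a2Seq a b n ∈ S) (n : ℕ) : a2Seq a b n ∈ S :=
  hper.map_mod_nat n ▸ hS _ (Nat.mod_lt _ (by norm_num))

theorem a2Seq_ne_zero (ha : a ≠ 0) (hb : b ≠ 0) (ha1 : a + 1 ≠ 0) (hb1 : b + 1 ≠ 0)
    (hab1 : a + b + 1 ≠ 0) (n : ℕ) : a2Seq a b n ≠ 0 := by
  refine a2Seq_mem_of_forall_lt_five (S := {0}ᶜ) (a2Seq_periodic ha hb ha1 hb1 hab1) ?_ n
  intro m hm
  interval_cases m
  · exact ha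
  · exact hb
  · exact div_ne_zero hb1 ha
  · exact a2Seq_three ha ▸ div_ne_zero hab1 (mul_ne_zero ha hb)
  · exact a2Seq_four ha hb hb1 ▸ div_ne_zero ha1 hb

theorem a2Seq_mem_closure (ha : a ≠ 0) (hb : b ≠ 0) (ha1 : a + 1 ≠ 0) (hb1 : b + 1 ≠ 0)
    (hab1 : a + b + 1 ≠ 0) (n : ℕ) : a2Seq a b n ∈ Subsemiring.closure {a, b, a⁻¹, b⁻¹} := by
  refine a2Seq_mem_of_forall_lt_five (a2Seq_periodic ha hb ha1 hb1 hab1) ?_ n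
  have hgen : ∀ z ∈ ({a, b, a⁻¹, b⁻¹} : Set K), z ∈ Subsemiring.closure {a, b, a⁻¹, b⁻¹} :=
    fun z hz => Subsemiring.subset_closure hz
  have ha' := hgen a (by simp)
  have hb' := hgen b (by simp)
  have ha_inv := hgen a⁻¹ (by simp)
  have hb_inv := hgen b⁻¹ (by simp)
  intro m hm
  interval_cases m
  · exact ha'
  · exact hb'
  · rw [a2Seq_two, show (b + 1) / a = b * a⁻¹ + a⁻¹ by ring]
    exact add_mem (mul_mem hb' ha_inv) ha_inv
  · rw [a2Seq_three ha, show (a + b + 1) / (a * b) = b⁻¹ + a⁻¹ + a⁻¹ * b⁻¹ by field_simp]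
    exact add_mem (add_mem hb_inv ha_inv) (mul_mem ha_inv hb_inv)
  · rw [a2Seq_four ha hb hb1, show (a + 1) / b = a * b⁻¹ + b⁻¹ by ring]
    exact add_mem (mul_mem ha' hb_inv) hb_inv

theorem eq_a2Seq_of_rec {y : ℕ → K} (h₀ : y 0 = a) (h₁ : y 1 = b)
    (hne : ∀ n, a2Seq a b n ≠ 0) (hrec : ∀ n, y (n + 2) * y n = y (n + 1) + 1) (n : ℕ) :
    y n = a2Seq a b n := by
  induction n using Nat.twoStepInduction with
  | zero => exact h₀
  | one => exact h₁
  | more n ih₀ ih₁ =>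
    rw [a2Seq, ← ih₀, ← ih₁, eq_div_iff (ih₀ ▸ hne n), hrec]

def laurentMonomial (ha : a ≠ 0) (hb : b ≠ 0) : Multiplicative (Fin 2 → ℤ) →* K where
  toFun m := a ^ m.toAdd 0 * b ^ m.toAdd 1
  map_one' := by simp
  map_mul' m m' := by
    simp only [toAdd_mul, Pi.add_apply, zpow_add₀ ha, zpow_add₀ hb]
    ring

theorem exists_nat_laurent_sum_of_mem_closure (ha : a ≠ 0) (hb : b ≠ 0) {z : K}
    (hz : z ∈ Subsemiring.closure {a, b, a⁻¹, b⁻¹}) :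
    ∃ c : (Fin 2 → ℤ) →₀ ℕ, z = c.sum fun m n => n • (a ^ m 0 * b ^ m 1) := by
  let ev := AddMonoidAlgebra.lift ℕ K (Fin 2 → ℤ) (laurentMonomial ha hb)
  have hmono : ∀ m : Fin 2 → ℤ, a ^ m 0 * b ^ m 1 ∈ ev.range := fun m =>
    ⟨AddMonoidAlgebra.single m 1, by simp [ev, laurentMonomial]⟩
  have hle : Subsemiring.closure {a, b, a⁻¹, b⁻¹} ≤ ev.range.toSubsemiring := by
    rw [Subsemiring.closure_le]
    rintro z (rfl | rfl | rfl | rfl)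
    · simpa using hmono ![1, 0]
    · simpa using hmono ![0, 1]
    · simpa using hmono ![-1, 0]
    · simpa using hmono ![0, -1]
  obtain ⟨f, rfl⟩ := hle hz
  exact ⟨f.coeff, AddMonoidAlgebra.lift_apply _ _⟩

end A2

open MvPolynomial

theorem algebraMap_ne_zero_of_constantCoeff_ne_zero {σ R : Type*} [CommRing R]
    {p : MvPolynomial σ R} (hp : constantCoeff p ≠ 0) :
    algebraMap (MvPolynomial σ R) (FractionRing (MvPolynomial σ R)) p ≠ 0 := by
  rw [Ne, IsFractionRing.to_map_eq_zero_iff]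
  rintro rfl
  simp at hp

theorem Xvar_ne_zero (i : Fin 2) : Xvar i ≠ 0 := by
  rw [Xvar, Ne, IsFractionRing.to_map_eq_zero_iff]
  exact X_ne_zero i

theorem Xvar_add_one_ne_zero (i : Fin 2) : Xvar i + 1 ≠ 0 := by
  have h : constantCoeff (X i + 1 : MvPolynomial (Fin 2) ℚ) ≠ 0 := by simp
  simpa [Xvar] using algebraMap_ne_zero_of_constantCoeff_ne_zero h

theorem Xvar_zero_add_Xvar_one_add_one_ne_zero : Xvar 0 + Xvar 1 + 1 ≠ 0 := by
  have h : constantCoeff (X 0 + X 1 + 1 : MvPolynomial (Fin 2) ℚ) ≠ 0 := by simp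
  simpa [Xvar] using algebraMap_ne_zero_of_constantCoeff_ne_zero h

/-- Type `A₂` exchange recursion: if `x 1 = x₁`, `x 2 = x₂` and
`x_{k+1} x_{k-1} = x_k + 1` for `k ≥ 2`, then the sequence is 5-periodic and
each `x k` (`k ≥ 1`) is a Laurent polynomial in `x₁, x₂` with nonnegative
integer coefficients. -/
theorem a2_periodicity_and_positivity
    (x : ℕ → FractionRing (MvPolynomial (Fin 2) ℚ))
    (h1 : x 1 = Xvar 0) (h2 : x 2 = Xvar 1)
    (hrec : ∀ k, 2 ≤ k → x (k + 1) * x (k - 1) = x k + 1) :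
    (∀ k, 1 ≤ k → x (k + 5) = x k) ∧
    (∀ k, 1 ≤ k → ∃ c : (Fin 2 → ℤ) →₀ ℕ,
      x k = c.sum fun m n => n • (Xvar 0 ^ (m 0) * Xvar 1 ^ (m 1))) := by
  have ha := Xvar_ne_zero 0
  have hb := Xvar_ne_zero 1
  have ha1 := Xvar_add_one_ne_zero 0
  have hb1 := Xvar_add_one_ne_zero 1
  have hab1 := Xvar_zero_add_Xvar_one_add_one_ne_zero
  have hx : ∀ k, x (k + 1) = a2Seq (Xvar 0) (Xvar 1) k :=
    eq_a2Seq_of_rec (y := fun k => x (k + 1)) h1 h2 (a2Seq_ne_zero ha hb ha1 hb1 hab1)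
      fun n => by simpa using hrec (n + 2) (by omega)
  refine ⟨fun k hk => ?_, fun k hk => ?_⟩ <;> obtain ⟨k, rfl⟩ := Nat.exists_eq_add_of_le' hk
  · rw [add_right_comm, hx, hx]
    exact a2Seq_periodic ha hb ha1 hb1 hab1 k
  · rw [hx]
    exact exists_nat_laurent_sum_of_mem_closure ha hb (a2Seq_mem_closure ha hb ha1 hb1 hab1 k)
end
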